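/- arXiv:2106.02553 — 7 statements merged into one kernel-verified Lean document; each statement's English description precedes it below -/
import Mathlib

section
/- Let n ≥ 1 and let S ⊆ ℝ^n be a compact convex set contained in the nonnegative orthant that contains at least one point all of whose coordinates are strictly positive. For j = 1,…,n let s̄_j = max_{s ∈ S} s_j and set R = (min_j s̄_j)/(max_j s̄_j). Let s* be a maximizer over S of the Nash social welfare W(s) = ∑_{j=1}^n log s_j (with W(s) = −∞ if some coordinate s_j ≤ 0); such a maximizer exists and has all coordinates strictly positive. Then ∑_{j=1}^n s*_j ≥ R · ((2·√n − 1)/n) · max_{s ∈ S} ∑_{j=1}^n s_j; equivalently, the price of fairness (max_{s∈S} ∑_j s_j − ∑_j s*_j)/(max_{s∈S} ∑_j s_j) is at most 1 − R·(2√n − 1)/n. -/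
open Finset

/-- log(1+x) ≥ x - 2x² for x ≥ -1/2. -/
lemma pof_logbd (x : ℝ) (hx : -(1/2) ≤ x) : x - 2*x^2 ≤ Real.log (1+x) := by
  have h1 : (0:ℝ) < 1 + x := by linarith
  have h2 := Real.log_le_sub_one_of_pos (show (0:ℝ) < (1+x)⁻¹ by positivity)
  rw [Real.log_inv] at h2
  have h3 : 1 - (1+x)⁻¹ ≤ Real.log (1+x) := by linarith
  have h4 : x - 2*x^2 ≤ 1 - (1+x)⁻¹ := by
    have hinv : (1:ℝ) - (1+x)⁻¹ = x/(1+x) := by field_simp; ring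
    rw [hinv, le_div_iff₀ h1]
    nlinarith [sq_nonneg x]
  linarith

/-- Pointwise dual certificate (polynomial form). -/
lemma pof_pointwise (m M u zj s nR : ℝ) (hm0 : 0 < m) (hmM : m ≤ M)
    (hs1 : 1 ≤ s) (hsq : s^2 = nR) (hu : m ≤ nR * u) (hu0 : 0 < u)
    (hz0 : 0 ≤ zj) (hzM : zj ≤ M) :
    m*(2*s-1)*zj*u ≤ M*nR*u^2 + M*m*zj - M*m*u := by
  have hM0 : 0 < M := lt_of_lt_of_le hm0 hmM
  rcases le_or_gt ((2*s-1)*u) M with hc | hc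
  · have h1 : 0 ≤ zj * (M*m - m*(2*s-1)*u) := mul_nonneg hz0 (by nlinarith)
    have h2 : 0 ≤ (M*u) * (nR*u - m) := mul_nonneg (by positivity) (by linarith)
    nlinarith [h1, h2]
  · have h1 : 0 ≤ (M - zj) * (m*(2*s-1)*u - M*m) := mul_nonneg (by linarith) (by nlinarith)
    have h2 : 0 ≤ M * (nR*u^2 - 2*s*m*u + m^2) := by
      have e : nR*u^2 - 2*s*m*u + m^2 = (s*u - m)^2 := by rw [← hsq]; ring
      rw [e]; positivity
    have h3 : 0 ≤ M * (m*(M-m)) := mul_nonneg hM0.le (mul_nonneg hm0.le (by linarith))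
    nlinarith [h1, h2, h3]

/-- Divided form of the certificate. -/
lemma pof_pointwise' (m M u zj s nR : ℝ) (hm0 : 0 < m) (hmM : m ≤ M)
    (hs1 : 1 ≤ s) (hsq : s^2 = nR) (hu : m ≤ nR * u) (hu0 : 0 < u)
    (hz0 : 0 ≤ zj) (hzM : zj ≤ M) :
    m/M*((2*s-1)/nR) * zj ≤ u + m/nR*(zj/u) - m/nR := by
  have hM0 : 0 < M := lt_of_lt_of_le hm0 hmM
  have hn0 : 0 < nR := by nlinarith
  have heq : u + m/nR*(zj/u) - m/nR - m/M*((2*s-1)/nR)*zj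
      = (M*nR*u^2 + M*m*zj - M*m*u - m*(2*s-1)*zj*u) / (M*nR*u) := by
    field_simp
  have hkey := pof_pointwise m M u zj s nR hm0 hmM hs1 hsq hu hu0 hz0 hzM
  have hnn : 0 ≤ u + m/nR*(zj/u) - m/nR - m/M*((2*s-1)/nR)*zj := by
    rw [heq]
    apply div_nonneg (by linarith) (by positivity)
  linarith

/-- (Price of fairness for convex allocation problems, Bertsimas–Farias–
Trichakis.) Let `n ≥ 1` and let `S ⊆ ℝ^n` be a compact convex set contained in the nonnegative
orthant containing a strictly positive point. For each coordinate `j` let `sbar j` be the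
maximum of the `j`-th coordinate over `S`, and set `R = (min_j sbar j) / (max_j sbar j)`.
Let `sstar ∈ S` be a maximizer over `S` of the Nash social welfare `W(s) = ∑_j log s_j`
(with `W(s) = −∞` when some coordinate is `≤ 0`; any maximizer has strictly positive
coordinates). Then `∑_j sstar j ≥ R · ((2√n − 1)/n) · max_{s ∈ S} ∑_j s_j`. -/
theorem price_of_fairness_nash (n : ℕ) (hn : 1 ≤ n) (S : Set (Fin n → ℝ))
    (hScomp : IsCompact S) (hSconv : Convex ℝ S)
    (hSnn : ∀ s ∈ S, ∀ j, 0 ≤ s j)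
    (hSpos : ∃ s ∈ S, ∀ j, 0 < s j)
    (sbar : Fin n → ℝ) (hsbar : ∀ j, IsGreatest ((fun s : Fin n → ℝ => s j) '' S) (sbar j))
    (sstar : Fin n → ℝ) (hmem : sstar ∈ S) (hpos : ∀ j, 0 < sstar j)
    (hstar : ∀ s ∈ S, (∀ j, 0 < s j) →
      ∑ j, Real.log (s j) ≤ ∑ j, Real.log (sstar j))
    (utilOpt : ℝ) (hutil : IsGreatest ((fun s : Fin n → ℝ => ∑ j, s j) '' S) utilOpt) :
    (Finset.univ.inf' (⟨⟨0, hn⟩, Finset.mem_univ _⟩ : (Finset.univ : Finset (Fin n)).Nonempty)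
          sbar /
        Finset.univ.sup' (⟨⟨0, hn⟩, Finset.mem_univ _⟩ : (Finset.univ : Finset (Fin n)).Nonempty)
          sbar) *
      ((2 * Real.sqrt n - 1) / n) * utilOpt ≤ ∑ j, sstar j := by
  have hnR : (1:ℝ) ≤ (n:ℝ) := by exact_mod_cast hn
  have hn0 : (0:ℝ) < (n:ℝ) := by linarith
  set sq : ℝ := Real.sqrt n with hsqdef
  have hsq : sq ^ 2 = (n:ℝ) := Real.sq_sqrt hn0.le
  have hsq0 : 0 ≤ sq := Real.sqrt_nonneg _
  have hs1 : (1:ℝ) ≤ sq := by nlinarith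
  -- First-order condition of the Nash point
  have foc : ∀ s ∈ S, ∑ j, s j / sstar j ≤ (n:ℝ) := by
    intro s hs
    set t : Fin n → ℝ := fun j => s j / sstar j - 1 with ht
    have htm : ∀ j, -1 ≤ t j := by
      intro j
      have h1 : 0 ≤ s j / sstar j := div_nonneg (hSnn s hs j) (hpos j).le
      simp only [ht]; linarith
    have key : ∀ α : ℝ, 0 < α → α ≤ 1/2 → (∑ j, t j) ≤ 2*α*(∑ j, (t j)^2) := by
      intro α hα hα2
      have hw : (1-α) • sstar + α • s ∈ S := hSconv hmem hs (by linarith) hα.le (by ring)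
      have hpos1 : ∀ j, 0 < 1 + α * t j := by
        intro j
        have h1 := mul_le_mul_of_nonneg_left (htm j) hα.le
        linarith
      have hwj : ∀ j, ((1-α) • sstar + α • s) j = sstar j * (1 + α * t j) := by
        intro j
        have h0 : sstar j ≠ 0 := (hpos j).ne'
        simp only [Pi.add_apply, Pi.smul_apply, smul_eq_mul, ht]
        field_simp
        ring
      have hwpos : ∀ j, 0 < ((1-α) • sstar + α • s) j := by
        intro j; rw [hwj j]; exact mul_pos (hpos j) (hpos1 j)
      have hlog := hstar _ hw hwpos
      have hsplit : ∑ j, Real.log (((1-α) • sstar + α • s) j)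
          = (∑ j, Real.log (sstar j)) + ∑ j, Real.log (1 + α * t j) := by
        rw [← Finset.sum_add_distrib]
        refine Finset.sum_congr rfl fun j _ => ?_
        rw [hwj j, Real.log_mul (hpos j).ne' (hpos1 j).ne']
      have hsum0 : ∑ j, Real.log (1 + α * t j) ≤ 0 := by
        rw [hsplit] at hlog; linarith
      have hlb : ∀ j ∈ univ, α * t j - 2*(α * t j)^2 ≤ Real.log (1 + α * t j) := by
        intro j _
        apply pof_logbd
        calc -(1/2) ≤ -α := by linarith
          _ = α * (-1) := by ring
          _ ≤ α * t j := mul_le_mul_of_nonneg_left (htm j) hα.le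
      have hstep : ∑ j, (α * t j - 2*(α * t j)^2) ≤ 0 :=
        le_trans (Finset.sum_le_sum hlb) hsum0
      have hexp : ∑ j, (α * t j - 2*(α * t j)^2)
          = α*(∑ j, t j) - 2*α^2*(∑ j, (t j)^2) := by
        rw [Finset.sum_sub_distrib]
        congr 1
        · rw [Finset.mul_sum]
        · rw [Finset.mul_sum]
          exact Finset.sum_congr rfl fun j _ => by ring
      rw [hexp] at hstep
      have h5 : α * (∑ j, t j) ≤ α * (2*α*(∑ j, (t j)^2)) := by nlinarith
      exact (mul_le_mul_iff_right₀ hα).mp h5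
    have hQ0 : 0 ≤ ∑ j, (t j)^2 := Finset.sum_nonneg fun j _ => sq_nonneg _
    have hT0 : (∑ j, t j) ≤ 0 := by
      by_contra hT
      push_neg at hT
      set T := ∑ j, t j
      set Q := ∑ j, (t j)^2
      set a := min (1/2) (T/(4*(Q+1))) with ha
      have hα : 0 < a := lt_min (by norm_num) (by positivity)
      have h := key a hα (min_le_left _ _)
      have h2 : a ≤ T/(4*(Q+1)) := min_le_right _ _
      have h2' : a * (4*(Q+1)) ≤ T := by
        rw [← le_div_iff₀ (by positivity : (0:ℝ) < 4*(Q+1))]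
        exact h2
      nlinarith [h, h2', hα, hQ0]
    have hTs : ∑ j, s j / sstar j = (∑ j, t j) + n := by
      have h6 : ∑ j, t j = (∑ j, s j / sstar j) - n := by
        simp only [ht]
        rw [Finset.sum_sub_distrib, Finset.sum_const, Finset.card_univ, Fintype.card_fin,
          nsmul_eq_mul, mul_one]
      rw [h6]; ring
    rw [hTs]; linarith
  -- basic facts about m and M
  obtain ⟨p, hpS, hppos⟩ := hSpos
  have hsbarpos : ∀ j, 0 < sbar j := fun j =>
    lt_of_lt_of_le (hppos j) ((hsbar j).2 ⟨p, hpS, rfl⟩)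
  set m : ℝ := Finset.univ.inf'
    (⟨⟨0, hn⟩, Finset.mem_univ _⟩ : (Finset.univ : Finset (Fin n)).Nonempty) sbar with hmdef
  set M : ℝ := Finset.univ.sup'
    (⟨⟨0, hn⟩, Finset.mem_univ _⟩ : (Finset.univ : Finset (Fin n)).Nonempty) sbar with hMdef
  have hm0 : 0 < m := by
    rw [hmdef]; apply (Finset.lt_inf'_iff _).2
    exact fun j _ => hsbarpos j
  have hmle : ∀ j, m ≤ sbar j := fun j => Finset.inf'_le _ (Finset.mem_univ j)
  have hleM : ∀ j, sbar j ≤ M := fun j => Finset.le_sup' _ (Finset.mem_univ j)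
  have hmM : m ≤ M := le_trans (hmle ⟨0, hn⟩) (hleM ⟨0, hn⟩)
  have hM0 : 0 < M := lt_of_lt_of_le hm0 hmM
  -- the floor on the Nash point
  have hfloor : ∀ j, m ≤ (n:ℝ) * sstar j := by
    intro j
    obtain ⟨w, hwS, hwj⟩ := (hsbar j).1
    have h1 := foc w hwS
    have h2 : w j / sstar j ≤ (n:ℝ) :=
      le_trans (Finset.single_le_sum (f := fun k => w k / sstar k)
        (fun k _ => div_nonneg (hSnn w hwS k) (hpos k).le) (Finset.mem_univ j)) h1
    have h3 : sbar j ≤ (n:ℝ) * sstar j := by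
      rw [div_le_iff₀ (hpos j)] at h2
      rw [← hwj]
      linarith [h2]
    linarith [hmle j]
  -- the utilitarian point
  obtain ⟨z, hzS, hzsum⟩ := hutil.1
  have hzle : ∀ j, z j ≤ M := fun j => le_trans ((hsbar j).2 ⟨z, hzS, rfl⟩) (hleM j)
  -- pointwise certificate
  have main : ∀ j ∈ univ,
      m/M*((2*sq-1)/n) * z j ≤ sstar j + m/n*(z j/sstar j) - m/n :=
    fun j _ => pof_pointwise' m M (sstar j) (z j) sq n hm0 hmM hs1 hsq
      (hfloor j) (hpos j) (hSnn z hzS j) (hzle j)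
  have hsum := Finset.sum_le_sum main
  have hmul : (n:ℝ) * (m/n) = m := by field_simp
  have hzsum' : ∑ j, z j = utilOpt := hzsum
  calc m/M*((2*sq-1)/n) * utilOpt = ∑ j, m/M*((2*sq-1)/n) * z j := by
        rw [← Finset.mul_sum, hzsum']
    _ ≤ ∑ j, (sstar j + m/n*(z j/sstar j) - m/n) := hsum
    _ = (∑ j, sstar j) + (m/n) * (∑ j, z j / sstar j) - m := by
        rw [Finset.sum_sub_distrib, Finset.sum_add_distrib, ← Finset.mul_sum,
          Finset.sum_const, Finset.card_univ, Fintype.card_fin, nsmul_eq_mul, hmul]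
    _ ≤ ∑ j, sstar j := by
        have hf := foc z hzS
        have hmn : 0 ≤ m/n := by positivity
        nlinarith [mul_le_mul_of_nonneg_left hf hmn, hmul]
end

section
/- Consider a grouped K-armed bandit instance with star topology. Then for every maximizer q* of the Nash program P(θ) one has ∑_{g ∈ 𝒢} s^g(q*) ≥ (1/2) · max{ ∑_{g ∈ 𝒢} s^g(q) : q feasible }. Equivalently, the price of fairness of the Nash solution relative to the utilitarian optimum over the feasible set of P(θ) is at most 1/2. -/
open scoped Classical
open Finset

noncomputable section

/-- Bernoulli KL divergence `kl(p,q)`. -/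
def klB (p q : ℝ) : ℝ :=
  p * Real.log (p / q) + (1 - p) * Real.log ((1 - p) / (1 - q))

/-- A grouped `K`-armed bandit instance: a finite set of arms `A`, a finite set of groups `G`,
for each group a nonempty set of accessible arms (every arm accessible to some group),
and mean rewards `θ` with values in `(0,1)`. -/
structure GroupedBandit (A G : Type*) [Fintype A] [Fintype G] where
  acc : G → Finset A
  acc_nonempty : ∀ g, (acc g).Nonempty
  acc_cover : ∀ a, ∃ g, a ∈ acc g
  θ : A → ℝ
  θ_mem : ∀ a, θ a ∈ Set.Ioo (0 : ℝ) 1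

namespace GroupedBandit

variable {A G : Type*} [Fintype A] [Fintype G] (I : GroupedBandit A G)

/-- `OPT(g) = max_{a ∈ 𝒜^g} θ(a)`. -/
def OPT (g : G) : ℝ := (I.acc g).sup' (I.acc_nonempty g) I.θ

/-- `Δ^g(a) = OPT(g) − θ(a)`. -/
def Δ (g : G) (a : A) : ℝ := I.OPT g - I.θ a

/-- `𝒢_a = {g : a ∈ 𝒜^g}`. -/
def Ga (a : A) : Finset G := Finset.univ.filter (fun g => a ∈ I.acc g)

lemma Ga_nonempty (a : A) : (I.Ga a).Nonempty := by
  obtain ⟨g, hg⟩ := I.acc_cover a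
  exact ⟨g, by simp [Ga, hg]⟩

/-- `𝒜_sub^g = {a ∈ 𝒜^g : θ(a) < OPT(g)}`. -/
def Asubg (g : G) : Finset A := (I.acc g).filter (fun a => I.θ a < I.OPT g)

/-- `𝒜_sub = {a : a ∈ 𝒜_sub^g for every g ∈ 𝒢_a}`. -/
def Asub : Finset A := Finset.univ.filter (fun a => ∀ g ∈ I.Ga a, a ∈ I.Asubg g)

/-- `J^g(a) = 1 / kl(θ(a), OPT(g))`. -/
def Jg (g : G) (a : A) : ℝ := 1 / klB (I.θ a) (I.OPT g)

/-- `J(a) = max_{g ∈ 𝒢_a} J^g(a)`. -/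
def J (a : A) : ℝ := (I.Ga a).sup' (I.Ga_nonempty a) fun g => I.Jg g a

/-- Feasibility for the Nash program `P(θ)`. -/
def Feasible (q : G → A → ℝ) : Prop :=
  (∀ g a, 0 ≤ q g a) ∧
  (∀ a ∈ I.Asub, ∑ g, q g a = 1) ∧
  (∀ g a, ¬(a ∈ I.Asub ∧ a ∈ I.acc g) → q g a = 0)

/-- `s^g(q)`, the utility gain of group `g` under allocation `q`. -/
def s (q : G → A → ℝ) (g : G) : ℝ :=
  ∑ a ∈ I.Asubg g, I.Δ g a * I.Jg g a
    - ∑ a ∈ I.Asubg g ∩ I.Asub, I.Δ g a * q g a * I.J a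

/-- `q` is a maximizer of the Nash program `P(θ)` with value `> −∞`:
it is feasible, all `s^g(q) > 0`, and it dominates (in Nash social welfare) every feasible
point with finite value. -/
def NashOptimal (q : G → A → ℝ) : Prop :=
  I.Feasible q ∧ (∀ g, 0 < I.s q g) ∧
  ∀ q', I.Feasible q' → (∀ g, 0 < I.s q' g) →
    ∑ g, Real.log (I.s q' g) ≤ ∑ g, Real.log (I.s q g)

/-- Assumption 1: every group has a suboptimal arm shared with another group. -/
def Assumption1 : Prop :=
  ∀ g, ∃ a ∈ I.acc g, I.θ a < I.OPT g ∧ 2 ≤ (I.Ga a).card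

/-- Star topology: at least two groups; every arm is either shared by all groups or exclusive
to one group; there is at least one shared arm; every shared arm is strictly worse than every
group's optimum. -/
def Star : Prop :=
  2 ≤ Fintype.card G ∧
  (∀ a : A, I.Ga a = Finset.univ ∨ (I.Ga a).card = 1) ∧
  (∃ a : A, I.Ga a = Finset.univ) ∧
  (∀ a : A, I.Ga a = Finset.univ → ∀ g : G, I.θ a < I.OPT g)

end GroupedBandit

end


section AuxAnalytic

lemma klB_pos {p q : ℝ} (hp : 0 < p) (hp1 : p < 1) (hpq : p < q) (hq1 : q < 1) :
    0 < klB p q := by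
  have hq : 0 < q := hp.trans hpq
  have h1p : 0 < 1 - p := by linarith
  have h1q : 0 < 1 - q := by linarith
  have h1 : Real.log (q / p) < q / p - 1 := by
    apply Real.log_lt_sub_one_of_pos (div_pos hq hp)
    intro h
    rw [div_eq_one_iff_eq hp.ne'] at h
    exact hpq.ne' h
  have h2 : Real.log ((1 - q) / (1 - p)) ≤ (1 - q) / (1 - p) - 1 :=
    Real.log_le_sub_one_of_pos (div_pos h1q h1p)
  have e1 : Real.log (p / q) = - Real.log (q / p) := by
    rw [Real.log_div hp.ne' hq.ne', Real.log_div hq.ne' hp.ne']; ring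
  have e2 : Real.log ((1 - p) / (1 - q)) = - Real.log ((1 - q) / (1 - p)) := by
    rw [Real.log_div h1p.ne' h1q.ne', Real.log_div h1q.ne' h1p.ne']; ring
  have hd1 : q / p - 1 = (q - p) / p := by field_simp
  have hd2 : (1 - q) / (1 - p) - 1 = (p - q) / (1 - p) := by field_simp; ring
  rw [klB, e1, e2]
  rw [hd1] at h1; rw [hd2] at h2
  have k1 : p * Real.log (q / p) < q - p := by
    have := (mul_lt_mul_iff_right₀ hp).mpr h1
    rwa [mul_div_cancel₀ _ hp.ne'] at this
  have k2 : (1 - p) * Real.log ((1 - q) / (1 - p)) ≤ p - q := by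
    have := (mul_le_mul_iff_right₀ h1p).mpr h2
    rwa [mul_div_cancel₀ _ h1p.ne'] at this
  nlinarith

lemma klB_mono {p q₁ q₂ : ℝ} (hp : 0 < p) (hpq : p ≤ q₁) (h12 : q₁ ≤ q₂) (hq2 : q₂ < 1) :
    klB p q₁ ≤ klB p q₂ := by
  have hq1 : 0 < q₁ := lt_of_lt_of_le hp hpq
  have hq2p : 0 < q₂ := lt_of_lt_of_le hq1 h12
  have h1q1 : 0 < 1 - q₁ := by linarith
  have h1q2 : 0 < 1 - q₂ := by linarith
  have hp1 : p < 1 := by linarith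
  have h1p : 0 < 1 - p := by linarith
  have e : klB p q₂ - klB p q₁ =
      p * (Real.log q₁ - Real.log q₂) + (1 - p) * (Real.log (1 - q₁) - Real.log (1 - q₂)) := by
    rw [klB, klB, Real.log_div hp.ne' hq1.ne', Real.log_div hp.ne' hq2p.ne',
      Real.log_div h1p.ne' h1q1.ne', Real.log_div h1p.ne' h1q2.ne']
    ring
  have h1 : Real.log q₂ - Real.log q₁ ≤ q₂ / q₁ - 1 := by
    have := Real.log_le_sub_one_of_pos (div_pos hq2p hq1)
    rwa [Real.log_div hq2p.ne' hq1.ne'] at this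
  have h2 : 1 - (1 - q₂) / (1 - q₁) ≤ Real.log (1 - q₁) - Real.log (1 - q₂) := by
    have := Real.log_le_sub_one_of_pos (div_pos h1q2 h1q1)
    rw [Real.log_div h1q2.ne' h1q1.ne'] at this
    linarith
  have hA : 1 - q₂ / q₁ ≤ Real.log q₁ - Real.log q₂ := by linarith
  have hfrac : p * (q₂ / q₁) + (1 - p) * ((1 - q₂) / (1 - q₁)) ≤ 1 := by
    have key2 : p * q₂ * (1 - q₁) + (1 - p) * (1 - q₂) * q₁ ≤ q₁ * (1 - q₁) := by
      nlinarith [mul_nonneg (sub_nonneg.mpr h12) (sub_nonneg.mpr hpq)]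
    have e3 : p * (q₂ / q₁) + (1 - p) * ((1 - q₂) / (1 - q₁))
        = (p * q₂ * (1 - q₁) + (1 - p) * (1 - q₂) * q₁) / (q₁ * (1 - q₁)) := by
      field_simp
    rw [e3, div_le_one (mul_pos hq1 h1q1)]; exact key2
  have key : 0 ≤ klB p q₂ - klB p q₁ := by
    rw [e]
    nlinarith [mul_le_mul_of_nonneg_left hA hp.le, mul_le_mul_of_nonneg_left h2 h1p.le]
  linarith

lemma log_ge_quad {x : ℝ} (hx : -(1/2) ≤ x) : x - 2 * x^2 ≤ Real.log (1 + x) := by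
  have h1x : 0 < 1 + x := by linarith
  have h : 1 - 1/(1+x) ≤ Real.log (1 + x) := by
    have := Real.log_le_sub_one_of_pos (show (0:ℝ) < (1+x)⁻¹ from inv_pos.mpr h1x)
    rw [Real.log_inv] at this
    have e : 1/(1+x) = (1+x)⁻¹ := one_div _
    rw [e]; linarith
  have h2 : 1 - 1/(1+x) = x / (1+x) := by field_simp; ring
  rw [h2] at h
  have h3 : x - 2*x^2 ≤ x/(1+x) := by
    rw [le_div_iff₀ h1x]
    nlinarith [mul_nonneg (sq_nonneg x) (by linarith : (0:ℝ) ≤ 1 + 2*x)]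
  linarith

lemma sum_ratio_le {G : Type*} [Fintype G] (s u : G → ℝ) (hs : ∀ g, 0 < s g) (hu : ∀ g, 0 ≤ u g)
    (h : ∀ t : ℝ, 0 < t → t < 1 →
      ∑ g, Real.log ((1 - t) * s g + t * u g) ≤ ∑ g, Real.log (s g)) :
    ∑ g, u g / s g ≤ Fintype.card G := by
  set r : G → ℝ := fun g => u g / s g - 1 with hr
  have hrge : ∀ g, -1 ≤ r g := fun g => by
    have : 0 ≤ u g / s g := div_nonneg (hu g) (hs g).le
    simp only [hr]; linarith
  set R : ℝ := ∑ g, (r g)^2 with hR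
  have hRnn : 0 ≤ R := Finset.sum_nonneg fun g _ => sq_nonneg _
  clear_value r R
  have key : ∀ t : ℝ, 0 < t → t ≤ 1/2 → ∑ g, r g ≤ 2 * t * R := by
    intro t ht ht2
    have ht1 : t < 1 := by linarith
    have hlog : ∀ g, Real.log ((1 - t) * s g + t * u g)
        = Real.log (s g) + Real.log (1 + t * r g) := by
      intro g
      have e : (1 - t) * s g + t * u g = s g * (1 + t * r g) := by
        simp only [hr]
        field_simp [(hs g).ne']
        ring
      rw [e, Real.log_mul (hs g).ne']
      have hpos : 0 < (1 - t) * s g + t * u g := by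
        have := mul_nonneg ht.le (hu g)
        have := mul_pos (show (0:ℝ) < 1 - t by linarith) (hs g)
        linarith
      rw [e] at hpos
      have h1 : 0 < 1 + t * r g := by
        by_contra hc
        push_neg at hc
        nlinarith [hs g]
      exact h1.ne'
    have h0 := h t ht ht1
    simp only [hlog, Finset.sum_add_distrib] at h0
    have h1 : ∑ g, Real.log (1 + t * r g) ≤ 0 := by linarith
    have h2 : ∀ g, t * r g - 2 * (t * r g)^2 ≤ Real.log (1 + t * r g) := by
      intro g
      apply log_ge_quad
      nlinarith [mul_le_mul_of_nonneg_left (hrge g) ht.le]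
    have h3 : ∑ g, (t * r g - 2 * (t * r g)^2) ≤ 0 :=
      le_trans (Finset.sum_le_sum fun g _ => h2 g) h1
    have h4 : ∑ g, (t * r g - 2 * (t * r g)^2) = t * (∑ g, r g) - 2 * t^2 * R := by
      rw [hR, Finset.mul_sum, Finset.mul_sum, ← Finset.sum_sub_distrib]
      apply Finset.sum_congr rfl; intro g _; ring
    rw [h4] at h3
    have : t * (∑ g, r g) ≤ t * (2 * t * R) := by nlinarith
    exact le_of_mul_le_mul_left this ht
  have hsum : ∑ g, r g ≤ 0 := by
    apply le_of_forall_pos_le_add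
    intro ε hε
    have hpos : (0:ℝ) < 2 * R + 1 := by positivity
    have ht : (0:ℝ) < min (1/2) (ε / (2 * R + 1)) := by
      apply lt_min (by norm_num)
      positivity
    have hk := key _ ht (min_le_left _ _)
    have h6 : 2 * (ε / (2 * R + 1)) * R ≤ ε := by
      rw [show 2 * (ε / (2 * R + 1)) * R = (2 * ε * R) / (2 * R + 1) by ring,
        div_le_iff₀ hpos]
      nlinarith
    have h7 : 2 * min (1/2) (ε / (2 * R + 1)) * R ≤ 2 * (ε / (2 * R + 1)) * R := by
      have hm : min (1/2) (ε / (2 * R + 1)) ≤ ε / (2 * R + 1) := min_le_right _ _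
      nlinarith [mul_le_mul_of_nonneg_right hm (by positivity : (0:ℝ) ≤ 2 * R)]
    linarith
  have hfin : ∑ g, r g = ∑ g, u g / s g - Fintype.card G := by
    simp [hr, Finset.sum_sub_distrib, Finset.card_univ]
  linarith

end AuxAnalytic

namespace GroupedBandit

variable {A G : Type*} [Fintype A] [Fintype G] (I : GroupedBandit A G)

lemma OPT_lt_one (g : G) : I.OPT g < 1 := by
  rw [OPT, Finset.sup'_lt_iff]
  exact fun a _ => (I.θ_mem a).2

lemma mem_Ga {a : A} {g : G} : g ∈ I.Ga a ↔ a ∈ I.acc g := by simp [Ga]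

lemma Jg_pos {a : A} {g : G} (h : I.θ a < I.OPT g) : 0 < I.Jg g a := by
  rw [Jg]
  exact div_pos one_pos (klB_pos (I.θ_mem a).1 (I.θ_mem a).2 h (I.OPT_lt_one g))

end GroupedBandit

/-- For a grouped `K`-armed bandit instance with star topology, every maximizer
`qstar` of the Nash program `P(θ)` achieves at least half of the utilitarian optimum:
`∑_g s^g(qstar) ≥ (1/2) · max { ∑_g s^g(q) : q feasible }`, i.e. the price of fairness is at
most `1/2`. -/
theorem star_price_of_fairness {A G : Type*} [Fintype A] [Fintype G]
    (I : GroupedBandit A G) (hθ : Function.Injective I.θ) (hstar : I.Star)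
    (qstar : G → A → ℝ) (hqstar : I.NashOptimal qstar) :
    ∀ q : G → A → ℝ, I.Feasible q → ∑ g, I.s q g ≤ 2 * ∑ g, I.s qstar g := by
  intro q hq
  obtain ⟨hG2, hdich, -, hshlt⟩ := hstar
  classical
  -- the set of shared arms
  set Sh : Finset A := Finset.univ.filter (fun a => I.Ga a = Finset.univ) with hSh
  have hmemSh : ∀ a, a ∈ Sh ↔ I.Ga a = Finset.univ := by intro a; simp [hSh]
  -- a group with minimal OPT
  have hGne : Nonempty G := Fintype.card_pos_iff.mp (by omega)
  obtain ⟨g₀, -, hg₀⟩ :=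
    Finset.exists_min_image Finset.univ I.OPT ⟨Classical.arbitrary G, Finset.mem_univ _⟩
  have hg₀le : ∀ g, I.OPT g₀ ≤ I.OPT g := fun g => hg₀ g (Finset.mem_univ g)
  have hθpos : ∀ a : A, 0 < I.θ a := fun a => (I.θ_mem a).1
  have hacc : ∀ {a : A} {g : G}, I.Ga a = Finset.univ → a ∈ I.acc g := by
    intro a g h
    exact I.mem_Ga.mp (h ▸ Finset.mem_univ g)
  have hShlt : ∀ a ∈ Sh, ∀ g : G, I.θ a < I.OPT g := by
    intro a ha g; exact hshlt a ((hmemSh a).mp ha) g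
  have hJg_pos : ∀ a ∈ Sh, ∀ g : G, 0 < I.Jg g a := fun a ha g => I.Jg_pos (hShlt a ha g)
  have hΔpos : ∀ a ∈ Sh, ∀ g : G, 0 < I.Δ g a := by
    intro a ha g; rw [GroupedBandit.Δ]; linarith [hShlt a ha g]
  -- on shared arms, J is attained at g₀
  have hJ : ∀ a ∈ Sh, I.J a = I.Jg g₀ a := by
    intro a ha
    rw [GroupedBandit.J]
    apply le_antisymm
    · apply Finset.sup'_le
      intro g _
      rw [GroupedBandit.Jg, GroupedBandit.Jg]
      apply one_div_le_one_div_of_le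
      · exact klB_pos (hθpos a) (I.θ_mem a).2 (hShlt a ha g₀) (I.OPT_lt_one g₀)
      · exact klB_mono (hθpos a) (hShlt a ha g₀).le (hg₀le g) (I.OPT_lt_one g)
    · exact Finset.le_sup' (fun g => I.Jg g a) (I.mem_Ga.mpr (hacc ((hmemSh a).mp ha)))
  have hJpos : ∀ a ∈ Sh, 0 < I.J a := by
    intro a ha; rw [hJ a ha]; exact hJg_pos a ha g₀
  -- non-shared arms are exclusive
  have hexcl : ∀ {a : A} {g : G}, a ∉ Sh → a ∈ I.acc g → I.Ga a = {g} := by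
    intro a g hna hag
    rcases hdich a with h | h
    · exact absurd ((hmemSh a).mpr h) hna
    · obtain ⟨x, hx⟩ := Finset.card_eq_one.mp h
      have hmem : g ∈ I.Ga a := I.mem_Ga.mpr hag
      rw [hx] at hmem ⊢
      rw [Finset.mem_singleton.mp hmem]
  -- every suboptimal arm of a group is globally suboptimal
  have hsubg_sub : ∀ g, I.Asubg g ⊆ I.Asub := by
    intro g a ha
    have hag : a ∈ I.acc g ∧ I.θ a < I.OPT g := by
      simpa [GroupedBandit.Asubg] using ha
    rw [GroupedBandit.Asub, Finset.mem_filter]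
    refine ⟨Finset.mem_univ a, ?_⟩
    intro h hh
    rw [GroupedBandit.Asubg, Finset.mem_filter]
    by_cases hsh : a ∈ Sh
    · exact ⟨I.mem_Ga.mp hh, hShlt a hsh h⟩
    · have hGa := hexcl hsh hag.1
      rw [hGa, Finset.mem_singleton] at hh
      subst hh
      exact ⟨hag.1, hag.2⟩
  have hSh_subg : ∀ g, Sh ⊆ I.Asubg g := by
    intro g a ha
    rw [GroupedBandit.Asubg, Finset.mem_filter]
    exact ⟨hacc ((hmemSh a).mp ha), hShlt a ha g⟩
  have hSh_sub : Sh ⊆ I.Asub := fun a ha => hsubg_sub g₀ (hSh_subg g₀ ha)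
  -- exclusive suboptimal arms get full allocation from their group
  have hq1 : ∀ (q' : G → A → ℝ), I.Feasible q' → ∀ g, ∀ a ∈ I.Asubg g, a ∉ Sh →
      q' g a = 1 := by
    intro q' hq' g a ha hna
    have hag : a ∈ I.acc g := (Finset.mem_filter.mp ha).1
    have hGa : I.Ga a = {g} := hexcl hna hag
    have hzero : ∀ h : G, h ≠ g → q' h a = 0 := by
      intro h hh
      apply hq'.2.2
      rintro ⟨-, hacch⟩
      have : h ∈ I.Ga a := I.mem_Ga.mpr hacch
      rw [hGa, Finset.mem_singleton] at this
      exact hh this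
    have hsum := hq'.2.1 a (hsubg_sub g ha)
    rw [← hsum]
    exact (Finset.sum_eq_single g (fun h _ hh => hzero h hh)
      (fun h => absurd (Finset.mem_univ g) h)).symm
  -- key representation of s over feasible points
  have hrepr : ∀ (q' : G → A → ℝ), I.Feasible q' → ∀ g,
      I.s q' g = ∑ a ∈ Sh, (I.Δ g a * I.Jg g a - I.Δ g a * q' g a * I.J a) := by
    intro q' hq' g
    have hinter : I.Asubg g ∩ I.Asub = I.Asubg g := Finset.inter_eq_left.mpr (hsubg_sub g)
    rw [GroupedBandit.s, hinter, ← Finset.sum_sub_distrib]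
    symm
    apply Finset.sum_subset (hSh_subg g)
    intro a ha hna
    have hq'1 : q' g a = 1 := hq1 q' hq' g a ha hna
    have hGa : I.Ga a = {g} := hexcl hna (Finset.mem_filter.mp ha).1
    have hJa : I.J a = I.Jg g a := by
      rw [GroupedBandit.J]
      apply le_antisymm
      · apply Finset.sup'_le
        intro h hh
        rw [hGa, Finset.mem_singleton] at hh
        rw [hh]
      · exact Finset.le_sup' (fun h => I.Jg h a) (I.mem_Ga.mpr (Finset.mem_filter.mp ha).1)
    rw [hq'1, hJa]; ring
  -- B g, the maximal utility of group g
  set B : G → ℝ := fun g => ∑ a ∈ Sh, I.Δ g a * I.Jg g a with hB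
  have hBnn : ∀ g, 0 ≤ B g := by
    intro g
    exact Finset.sum_nonneg fun a ha => mul_nonneg (hΔpos a ha g).le (hJg_pos a ha g).le
  have hsle : ∀ (q' : G → A → ℝ), I.Feasible q' → ∀ g, I.s q' g ≤ B g := by
    intro q' hq' g
    rw [hrepr q' hq' g, hB]
    apply Finset.sum_le_sum
    intro a ha
    have : 0 ≤ I.Δ g a * q' g a * I.J a :=
      mul_nonneg (mul_nonneg (hΔpos a ha g).le (hq'.1 g a)) (hJpos a ha).le
    linarith
  -- the utilitarian allocation : g₀ takes all shared arms
  set qU : G → A → ℝ := fun g a =>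
    if a ∈ I.Asub ∧ a ∈ I.acc g ∧ (I.Ga a = Finset.univ → g = g₀) then 1 else 0 with hqU
  have hfeasU : I.Feasible qU := by
    refine ⟨fun g a => by simp only [hqU]; positivity, ?_, ?_⟩
    · intro a ha
      by_cases hsh : a ∈ Sh
      · have hGa := (hmemSh a).mp hsh
        have : ∀ g : G, qU g a = if g = g₀ then 1 else 0 := by
          intro g
          simp only [hqU]
          by_cases hgg : g = g₀
          · rw [if_pos hgg, if_pos ⟨ha, hacc hGa, fun _ => hgg⟩]
          · rw [if_neg hgg, if_neg]
            rintro ⟨-, -, h3⟩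
            exact hgg (h3 hGa)
        rw [Finset.sum_congr rfl fun g _ => this g]
        simp
      · obtain ⟨g₁, hg₁⟩ := I.acc_cover a
        have hGa : I.Ga a = {g₁} := hexcl hsh hg₁
        have hnu : I.Ga a ≠ Finset.univ := fun h => hsh ((hmemSh a).mpr h)
        have : ∀ g : G, qU g a = if g = g₁ then 1 else 0 := by
          intro g
          simp only [hqU]
          by_cases hgg : g = g₁
          · subst hgg
            rw [if_pos rfl, if_pos ⟨ha, hg₁, fun h => absurd h hnu⟩]
          · rw [if_neg hgg, if_neg]
            rintro ⟨-, h2, -⟩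
            have : g ∈ I.Ga a := I.mem_Ga.mpr h2
            rw [hGa, Finset.mem_singleton] at this
            exact hgg this
        rw [Finset.sum_congr rfl fun g _ => this g]
        simp
    · intro g a h
      simp only [hqU]
      rw [if_neg]
      rintro ⟨h1, h2, -⟩
      exact h ⟨h1, h2⟩
  have hsU : ∀ g, I.s qU g = if g = g₀ then 0 else B g := by
    intro g
    rw [hrepr qU hfeasU g]
    have hval : ∀ a ∈ Sh, qU g a = if g = g₀ then 1 else 0 := by
      intro a ha
      have hGa := (hmemSh a).mp ha
      simp only [hqU]
      by_cases hgg : g = g₀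
      · rw [if_pos hgg, if_pos ⟨hSh_sub ha, hacc hGa, fun _ => hgg⟩]
      · rw [if_neg hgg, if_neg]
        rintro ⟨-, -, h3⟩
        exact hgg (h3 hGa)
    by_cases hgg : g = g₀
    · rw [if_pos hgg]
      apply Finset.sum_eq_zero
      intro a ha
      rw [hval a ha, if_pos hgg, hJ a ha, hgg]
      ring
    · rw [if_neg hgg, hB]
      apply Finset.sum_congr rfl
      intro a ha
      rw [hval a ha, if_neg hgg]
      ring
  have hsUnn : ∀ g, 0 ≤ I.s qU g := by
    intro g
    rw [hsU g]
    by_cases hgg : g = g₀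
    · rw [if_pos hgg]
    · rw [if_neg hgg]; exact hBnn g
  -- apply Nash optimality along the segment towards qU
  have hspos := hqstar.2.1
  have hlog_t : ∀ t : ℝ, 0 < t → t < 1 →
      ∑ g, Real.log ((1 - t) * I.s qstar g + t * I.s qU g)
        ≤ ∑ g, Real.log (I.s qstar g) := by
    intro t ht ht1
    set qt : G → A → ℝ := fun g a => (1 - t) * qstar g a + t * qU g a with hqt
    have hfeas_t : I.Feasible qt := by
      refine ⟨?_, ?_, ?_⟩
      · intro g a
        simp only [hqt]
        have := hqstar.1.1 g a
        have := hfeasU.1 g a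
        nlinarith
      · intro a ha
        simp only [hqt]
        rw [Finset.sum_add_distrib, ← Finset.mul_sum, ← Finset.mul_sum,
          hqstar.1.2.1 a ha, hfeasU.2.1 a ha]
        ring
      · intro g a h
        simp only [hqt]
        rw [hqstar.1.2.2 g a h, hfeasU.2.2 g a h]
        ring
    have hst : ∀ g, I.s qt g = (1 - t) * I.s qstar g + t * I.s qU g := by
      intro g
      rw [hrepr qt hfeas_t g, hrepr qstar hqstar.1 g, hrepr qU hfeasU g,
        Finset.mul_sum, Finset.mul_sum, ← Finset.sum_add_distrib]
      apply Finset.sum_congr rfl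
      intro a _
      simp only [hqt]
      ring
    have hpos_t : ∀ g, 0 < I.s qt g := by
      intro g
      rw [hst g]
      have h1 := mul_pos (show (0:ℝ) < 1 - t by linarith) (hspos g)
      have h2 := mul_nonneg ht.le (hsUnn g)
      linarith
    have := hqstar.2.2 qt hfeas_t hpos_t
    calc ∑ g, Real.log ((1 - t) * I.s qstar g + t * I.s qU g)
        = ∑ g, Real.log (I.s qt g) := by
          apply Finset.sum_congr rfl
          intro g _
          rw [hst g]
      _ ≤ ∑ g, Real.log (I.s qstar g) := this
  have hratio : ∑ g, I.s qU g / I.s qstar g ≤ Fintype.card G :=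
    sum_ratio_le (I.s qstar) (I.s qU) hspos hsUnn hlog_t
  -- each group other than g₀ gets at least half of B g in the Nash solution
  have hstepD : ∀ g, g ≠ g₀ → B g ≤ 2 * I.s qstar g := by
    intro g hg
    have h1 : ∀ h : G, (if h = g₀ then (0:ℝ) else 1) ≤ I.s qU h / I.s qstar h := by
      intro h
      by_cases hh : h = g₀
      · rw [if_pos hh]
        exact div_nonneg (hsUnn h) (hspos h).le
      · rw [if_neg hh]
        rw [le_div_iff₀ (hspos h), one_mul]
        rw [hsU h, if_neg hh]
        exact hsle qstar hqstar.1 h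
    have hsplit : I.s qU g / I.s qstar g + ∑ h ∈ Finset.univ.erase g, I.s qU h / I.s qstar h
        = ∑ h, I.s qU h / I.s qstar h :=
      Finset.add_sum_erase Finset.univ (fun h => I.s qU h / I.s qstar h) (Finset.mem_univ g)
    have h2 : ∑ h ∈ Finset.univ.erase g, (if h = g₀ then (0:ℝ) else 1)
        ≤ ∑ h ∈ Finset.univ.erase g, I.s qU h / I.s qstar h :=
      Finset.sum_le_sum fun h _ => h1 h
    have h3 : ∑ h ∈ Finset.univ.erase g, (if h = g₀ then (0:ℝ) else 1)
        = (Fintype.card G : ℝ) - 2 := by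
      have e1 : ∀ h : G, (if h = g₀ then (0:ℝ) else 1) = 1 - (if h = g₀ then 1 else 0) := by
        intro h; by_cases hh : h = g₀ <;> simp [hh]
      rw [Finset.sum_congr rfl fun h _ => e1 h, Finset.sum_sub_distrib,
        Finset.sum_const, Finset.sum_ite_eq' (Finset.univ.erase g) g₀ (fun _ => (1:ℝ)),
        if_pos (Finset.mem_erase.mpr ⟨Ne.symm hg, Finset.mem_univ g₀⟩),
        Finset.card_erase_of_mem (Finset.mem_univ g), Finset.card_univ]
      have h1le : (1:ℕ) ≤ Fintype.card G := by omega
      rw [nsmul_eq_mul, mul_one, Nat.cast_sub h1le]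
      push_cast
      ring
    have h4 : I.s qU g / I.s qstar g ≤ 2 := by
      have := hratio
      rw [← hsplit] at this
      linarith
    rw [hsU g, if_neg hg] at h4
    rw [div_le_iff₀ (hspos g)] at h4
    linarith
  -- any feasible allocation is bounded by the utilitarian value
  have hstepA : ∑ g, I.s q g ≤ (∑ g, B g) - B g₀ := by
    have e1 : ∑ g, I.s q g
        = (∑ g, B g) - ∑ a ∈ Sh, ∑ g, I.Δ g a * q g a * I.J a := by
      have e0 : ∀ g : G, I.s q g = B g - ∑ a ∈ Sh, I.Δ g a * q g a * I.J a := by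
        intro g
        simp only [hB]
        rw [hrepr q hq g, Finset.sum_sub_distrib]
      rw [Finset.sum_congr rfl fun g _ => e0 g, Finset.sum_sub_distrib]
      congr 1
      exact Finset.sum_comm
    have hlow : ∀ a ∈ Sh, I.Δ g₀ a * I.Jg g₀ a ≤ ∑ g, I.Δ g a * q g a * I.J a := by
      intro a ha
      have hsum1 : ∑ g, q g a = 1 := hq.2.1 a (hSh_sub ha)
      have hle : ∑ g, I.Δ g₀ a * q g a * I.J a ≤ ∑ g, I.Δ g a * q g a * I.J a := by
        apply Finset.sum_le_sum
        intro g _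
        apply mul_le_mul_of_nonneg_right _ (hJpos a ha).le
        apply mul_le_mul_of_nonneg_right _ (hq.1 g a)
        rw [GroupedBandit.Δ, GroupedBandit.Δ]
        linarith [hg₀le g]
      have he : ∑ g, I.Δ g₀ a * q g a * I.J a = I.Δ g₀ a * I.J a := by
        rw [Finset.sum_congr rfl fun g (_ : g ∈ Finset.univ) =>
          (show I.Δ g₀ a * q g a * I.J a = (I.Δ g₀ a * I.J a) * q g a by ring),
          ← Finset.mul_sum, hsum1, mul_one]
      rw [← hJ a ha]
      linarith
    have h5 : B g₀ ≤ ∑ a ∈ Sh, ∑ g, I.Δ g a * q g a * I.J a := by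
      rw [hB]
      exact Finset.sum_le_sum hlow
    linarith
  -- conclusion
  have e2 : (∑ g, B g) - B g₀ = ∑ g ∈ Finset.univ.erase g₀, B g := by
    rw [← Finset.add_sum_erase _ B (Finset.mem_univ g₀)]
    ring
  have h6 : ∑ g ∈ Finset.univ.erase g₀, B g
      ≤ ∑ g ∈ Finset.univ.erase g₀, 2 * I.s qstar g := by
    apply Finset.sum_le_sum
    intro g hg
    exact hstepD g (Finset.mem_erase.mp hg).1
  have h7 : ∑ g ∈ Finset.univ.erase g₀, 2 * I.s qstar g ≤ 2 * ∑ g, I.s qstar g := by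
    rw [← Finset.mul_sum]
    have := hspos g₀
    have := Finset.add_sum_erase Finset.univ (I.s qstar) (Finset.mem_univ g₀)
    nlinarith [Finset.sum_le_sum fun g (_ : g ∈ Finset.univ.erase g₀) => le_refl (I.s qstar g)]
  linarith
end

section
/- Consider a grouped K-armed bandit instance with star topology and let q* be a maximizer of the Nash program P(θ) with f(q*) > −∞. Let a and b be shared arms with θ(a) < θ(b), and let g, h be groups with OPT(h) < OPT(g). If q*^g(b) > 0 then q*^h(a) = 0. -/
open scoped Classical
open Finset

/-- Positivity of the Bernoulli KL divergence. -/
lemma klB_pos' {p q : ℝ} (hp : p ∈ Set.Ioo (0:ℝ) 1) (hq : q ∈ Set.Ioo (0:ℝ) 1)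
    (hne : p ≠ q) : 0 < klB p q := by
  obtain ⟨hp0, hp1⟩ := hp
  obtain ⟨hq0, hq1⟩ := hq
  have h1 : Real.log (q / p) < q / p - 1 := by
    refine Real.log_lt_sub_one_of_pos (by positivity) ?_
    intro hc
    apply hne
    field_simp at hc
    linarith
  have h2 : Real.log ((1 - q) / (1 - p)) ≤ (1 - q) / (1 - p) - 1 :=
    Real.log_le_sub_one_of_pos (div_pos (by linarith) (by linarith))
  have e1 : Real.log (p / q) = -Real.log (q / p) := by
    rw [show p / q = (q / p)⁻¹ by rw [inv_div], Real.log_inv]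
  have e2 : Real.log ((1 - p) / (1 - q)) = -Real.log ((1 - q) / (1 - p)) := by
    rw [show (1 - p) / (1 - q) = ((1 - q) / (1 - p))⁻¹ by rw [inv_div], Real.log_inv]
  have h1' : p * Real.log (q / p) < q - p := by
    have hm := mul_lt_mul_of_pos_left h1 hp0
    have he : p * (q / p - 1) = q - p := by field_simp
    linarith
  have h2' : (1 - p) * Real.log ((1 - q) / (1 - p)) ≤ p - q := by
    have hm := mul_le_mul_of_nonneg_left h2 (by linarith : (0:ℝ) ≤ 1 - p)
    have he : (1 - p) * ((1 - q) / (1 - p) - 1) = p - q := by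
      have hne : (1:ℝ) - p ≠ 0 := by linarith
      rw [mul_sub, mul_one, mul_div_cancel₀ _ hne]
      ring
    linarith
  unfold klB
  rw [e1, e2]
  nlinarith [h1', h2']

/-- (Structure of optimal solutions, star topology.) Let `qstar` maximize the
Nash program `P(θ)` with finite value, over an instance with star topology. If `a` and `b` are
shared arms with `θ(a) < θ(b)`, and `g, h` are groups with `OPT(h) < OPT(g)`, then
`qstar^g(b) > 0` implies `qstar^h(a) = 0`. -/
theorem nash_optimal_structure {A G : Type*} [Fintype A] [Fintype G]
    (I : GroupedBandit A G) (hθ : Function.Injective I.θ) (hstar : I.Star)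
    (qstar : G → A → ℝ) (hq : I.NashOptimal qstar)
    (a b : A) (hsa : I.Ga a = Finset.univ) (hsb : I.Ga b = Finset.univ)
    (hab : I.θ a < I.θ b)
    (g h : G) (hgh : I.OPT h < I.OPT g) (hb : 0 < qstar g b) :
    qstar h a = 0 := by
  classical
  obtain ⟨hG2, _, _, hshared⟩ := hstar
  obtain ⟨⟨hq0, hqsum, hqsupp⟩, hspos, hopt⟩ := hq
  -- basic membership facts for shared arms
  have hacc : ∀ (c : A), I.Ga c = Finset.univ → ∀ g' : G, c ∈ I.acc g' := by
    intro c hc g'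
    have hmem : g' ∈ I.Ga c := hc ▸ Finset.mem_univ g'
    simpa [GroupedBandit.Ga] using hmem
  have hAsubg : ∀ (c : A), I.Ga c = Finset.univ → ∀ g' : G, c ∈ I.Asubg g' := by
    intro c hc g'
    simp [GroupedBandit.Asubg, hacc c hc g', hshared c hc g']
  have hAsub : ∀ (c : A), I.Ga c = Finset.univ → c ∈ I.Asub := by
    intro c hc
    simp only [GroupedBandit.Asub, Finset.mem_filter, Finset.mem_univ, true_and]
    exact fun g' _ => hAsubg c hc g'
  have haA : a ∈ I.Asub := hAsub a hsa
  have hbA : b ∈ I.Asub := hAsub b hsb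
  -- OPT values lie in (0,1)
  have hOPT : ∀ g' : G, I.OPT g' ∈ Set.Ioo (0:ℝ) 1 := by
    intro g'
    obtain ⟨c, hc, hceq⟩ := Finset.exists_mem_eq_sup' (I.acc_nonempty g') I.θ
    rw [GroupedBandit.OPT, hceq]
    exact I.θ_mem c
  -- J positivity for shared arms
  have hJpos : ∀ (c : A), I.Ga c = Finset.univ → 0 < I.J c := by
    intro c hc
    have hg' : g ∈ I.Ga c := hc ▸ Finset.mem_univ g
    have hkl : 0 < klB (I.θ c) (I.OPT g) :=
      klB_pos' (I.θ_mem c) (hOPT g) (ne_of_lt (hshared c hc g))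
    have hJg : 0 < I.Jg g c := by
      rw [GroupedBandit.Jg]
      positivity
    exact lt_of_lt_of_le hJg (Finset.le_sup' (fun g'' => I.Jg g'' c) hg')
  -- Δ positivity for shared arms
  have hΔ : ∀ (c : A), I.Ga c = Finset.univ → ∀ g' : G, 0 < I.Δ g' c :=
    fun c hc g' => sub_pos.mpr (hshared c hc g')
  have hJa : 0 < I.J a := hJpos a hsa
  have hJb : 0 < I.J b := hJpos b hsb
  have hDga : 0 < I.Δ g a := hΔ a hsa g
  have hDgb : 0 < I.Δ g b := hΔ b hsb g
  have hDha : 0 < I.Δ h a := hΔ a hsa h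
  have hDhb : 0 < I.Δ h b := hΔ b hsb h
  -- the key determinant inequality
  have hkey : I.Δ h b * I.Δ g a < I.Δ h a * I.Δ g b := by
    simp only [GroupedBandit.Δ]
    nlinarith [mul_pos (sub_pos.mpr hab) (sub_pos.mpr hgh)]
  have hneab : a ≠ b := fun hE => absurd hab (by rw [hE]; exact lt_irrefl _)
  have hnegh : g ≠ h := fun hE => absurd hgh (by rw [hE]; exact lt_irrefl _)
  have hnhg : h ≠ g := Ne.symm hnegh
  have hnba : b ≠ a := Ne.symm hneab
  -- by contradiction
  by_contra hha0
  have hha : 0 < qstar h a := lt_of_le_of_ne (hq0 h a) (Ne.symm hha0)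
  -- the perturbation
  set c0 : ℝ := I.Δ g a * I.J a / (I.Δ g b * I.J b) with hc0
  have hc0pos : 0 < c0 := by positivity
  set ε : ℝ := min (qstar h a) (qstar g b / c0) with hεdef
  have hεpos : 0 < ε := lt_min hha (by positivity)
  have hε1 : ε ≤ qstar h a := min_le_left _ _
  have hδ : c0 * ε ≤ qstar g b := by
    have hm : ε ≤ qstar g b / c0 := min_le_right _ _
    have := mul_le_mul_of_nonneg_left hm hc0pos.le
    rwa [mul_div_cancel₀ _ (ne_of_gt hc0pos)] at this
  set d : A → ℝ := fun a' => if a' = a then ε else if a' = b then -(c0 * ε) else 0 with hd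
  set e : G → ℝ := fun g' => if g' = g then 1 else if g' = h then -1 else 0 with he
  set q' : G → A → ℝ := fun g' a' => qstar g' a' + d a' * e g' with hq'
  -- feasibility of q'
  have hfeas' : I.Feasible q' := by
    refine ⟨?_, ?_, ?_⟩
    · intro gg aa
      by_cases h1 : aa = a
      · by_cases h2 : gg = g
        · have hv : q' gg aa = qstar g a + ε := by simp [hq', hd, he, h1, h2, hnhg, hnba]
          have := hq0 g a
          rw [hv]; linarith
        · by_cases h3 : gg = h
          · have hv : q' gg aa = qstar h a - ε := by
              simp [hq', hd, he, h1, h2, h3, hnhg, hnba]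
              try ring
            rw [hv]; linarith
          · have hv : q' gg aa = qstar gg aa := by simp [hq', hd, he, h1, h2, h3, hnhg, hnba]
            rw [hv]; exact hq0 gg aa
      · by_cases h4 : aa = b
        · by_cases h2 : gg = g
          · have hv : q' gg aa = qstar g b - c0 * ε := by
              simp [hq', hd, he, h1, h2, h4, hnhg, hnba]
              try ring
            rw [hv]; linarith
          · by_cases h3 : gg = h
            · have hv : q' gg aa = qstar h b + c0 * ε := by
                simp [hq', hd, he, h1, h2, h3, h4, hnhg, hnba]
                try ring
              rw [hv]
              have := hq0 h b
              nlinarith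
            · have hv : q' gg aa = qstar gg aa := by simp [hq', hd, he, h1, h2, h3, h4, hnhg, hnba]
              rw [hv]; exact hq0 gg aa
        · have hv : q' gg aa = qstar gg aa := by simp [hq', hd, h1, h4]
          rw [hv]; exact hq0 gg aa
    · intro a' ha'
      have hesum : ∑ i : G, e i = 0 := by
        have hsplit : ∀ i : G, e i =
            (if i = g then (1:ℝ) else 0) + (if i = h then (-1:ℝ) else 0) := by
          intro i
          by_cases h1 : i = g
          · simp [he, h1, hnegh]
          · by_cases h2 : i = h <;> simp [he, h1, h2, hnhg]
        rw [Finset.sum_congr rfl (fun i _ => hsplit i), Finset.sum_add_distrib]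
        simp
      calc ∑ i, q' i a' = ∑ i, qstar i a' + d a' * ∑ i : G, e i := by
            rw [Finset.mul_sum, ← Finset.sum_add_distrib]
        _ = ∑ i, qstar i a' := by rw [hesum]; ring
        _ = 1 := hqsum a' ha'
    · intro g' a' hcond
      have h1 : a' ≠ a := fun hE => hcond (hE ▸ ⟨haA, hacc a hsa g'⟩)
      have h2 : a' ≠ b := fun hE => hcond (hE ▸ ⟨hbA, hacc b hsb g'⟩)
      simp only [hq', hd, if_neg h1, if_neg h2, zero_mul, add_zero]
      exact hqsupp g' a' hcond
  -- the change in s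
  have hs : ∀ g' : G, I.s q' g' =
      I.s qstar g' - e g' * (I.Δ g' a * ε * I.J a - I.Δ g' b * (c0 * ε) * I.J b) := by
    intro g'
    have hamem : a ∈ I.Asubg g' ∩ I.Asub := Finset.mem_inter.mpr ⟨hAsubg a hsa g', haA⟩
    have hbmem : b ∈ I.Asubg g' ∩ I.Asub := Finset.mem_inter.mpr ⟨hAsubg b hsb g', hbA⟩
    have hsplit : ∀ a' ∈ I.Asubg g' ∩ I.Asub,
        I.Δ g' a' * q' g' a' * I.J a' =
          I.Δ g' a' * qstar g' a' * I.J a' + (I.Δ g' a' * d a' * I.J a') * e g' := by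
      intro a' _
      simp only [hq']
      ring
    have hpair : ∑ a' ∈ I.Asubg g' ∩ I.Asub, I.Δ g' a' * d a' * I.J a'
        = I.Δ g' a * ε * I.J a + I.Δ g' b * (-(c0 * ε)) * I.J b := by
      have hsub : ({a, b} : Finset A) ⊆ I.Asubg g' ∩ I.Asub := by
        intro x hx
        rcases Finset.mem_insert.mp hx with hx | hx
        · exact hx ▸ hamem
        · exact (Finset.mem_singleton.mp hx) ▸ hbmem
      have hzero : ∀ x ∈ I.Asubg g' ∩ I.Asub, x ∉ ({a, b} : Finset A) →
          I.Δ g' x * d x * I.J x = 0 := by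
        intro x _ hx
        simp only [Finset.mem_insert, Finset.mem_singleton] at hx
        push_neg at hx
        simp [hd, hx.1, hx.2]
      rw [← Finset.sum_subset hsub hzero, Finset.sum_pair hneab]
      simp [hd, hneab, Ne.symm hneab]
    simp only [GroupedBandit.s]
    rw [Finset.sum_congr rfl hsplit, Finset.sum_add_distrib, ← Finset.sum_mul, hpair]
    ring
  -- balance at g
  have hY : I.Δ g b * (c0 * ε) * I.J b = I.Δ g a * ε * I.J a := by
    rw [hc0]
    field_simp
  have hsg : I.s q' g = I.s qstar g := by
    rw [hs g]
    have heg : e g = 1 := by simp [he]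
    rw [heg, hY]
    ring
  -- strict improvement at h
  have hsh : I.s qstar h < I.s q' h := by
    rw [hs h]
    have heh : e h = -1 := by simp [he, Ne.symm hnegh, hnegh]
    rw [heh]
    have hc0' : c0 * (I.Δ g b * I.J b) = I.Δ g a * I.J a := by
      rw [hc0, div_mul_cancel₀ _ (ne_of_gt (mul_pos hDgb hJb))]
    have hlt : I.Δ h b * (c0 * ε) * I.J b < I.Δ h a * ε * I.J a := by
      rw [← mul_lt_mul_iff_of_pos_right hDgb]
      rw [show I.Δ h b * (c0 * ε) * I.J b * I.Δ g b
            = I.Δ h b * ε * (c0 * (I.Δ g b * I.J b)) from by ring, hc0']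
      nlinarith [mul_lt_mul_of_pos_right hkey (mul_pos hεpos hJa)]
    nlinarith
  -- all s q' positive, with strict improvement
  have hseq : ∀ g' : G, g' ≠ g → g' ≠ h → I.s q' g' = I.s qstar g' := by
    intro g' h1 h2
    rw [hs g']
    have : e g' = 0 := by simp [he, h1, h2]
    rw [this]
    ring
  have hspos' : ∀ g' : G, 0 < I.s q' g' := by
    intro g'
    by_cases h1 : g' = h
    · rw [h1]; exact lt_trans (hspos h) hsh
    · by_cases h2 : g' = g
      · rw [h2, hsg]; exact hspos g
      · rw [hseq g' h2 h1]; exact hspos g'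
  have hlt : ∑ g', Real.log (I.s qstar g') < ∑ g', Real.log (I.s q' g') := by
    refine Finset.sum_lt_sum (fun i _ => ?_) ⟨h, Finset.mem_univ h, ?_⟩
    · by_cases h1 : i = h
      · rw [h1]; exact (Real.log_lt_log (hspos h) hsh).le
      · by_cases h2 : i = g
        · rw [h2, hsg]
        · rw [hseq i h2 h1]
    · exact Real.log_lt_log (hspos h) hsh
  exact absurd (hopt q' hfeas' hspos') (not_le.mpr hlt)
end

section
/- Let G be a finite nonempty index set and let U ⊆ ℝ^G be a set with the midpoint-domination property: for all u, v ∈ U there exists w ∈ U with w_g ≥ (u_g + v_g)/2 for every g ∈ G. Define the Nash social welfare W(u) = ∑_{g ∈ G} log u_g if u_g > 0 for all g, and W(u) = −∞ otherwise. If u, v ∈ U both have all coordinates strictly positive and both attain sup_{x ∈ U} W(x), then u = v. -/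
open scoped Classical

/-- The Nash social welfare of a utility profile, with value `⊥ = −∞` when some coordinate
is not strictly positive. -/
noncomputable def NSW {G : Type*} [Fintype G] (x : G → ℝ) : EReal :=
  if ∀ g, 0 < x g then ((∑ g, Real.log (x g) : ℝ) : EReal) else ⊥

lemma log_midpoint {a b : ℝ} (ha : 0 < a) (hb : 0 < b) :
    (Real.log a + Real.log b) / 2 ≤ Real.log ((a + b) / 2) := by
  rcases eq_or_ne a b with rfl | hne
  · rw [add_self_div_two]; simp
  · have := strictConcaveOn_log_Ioi.2 ha hb hne (by norm_num : (0:ℝ) < 1/2)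
      (by norm_num : (0:ℝ) < 1/2) (by norm_num)
    simp only [smul_eq_mul] at this
    have h : (1/2 : ℝ) * a + (1/2) * b = (a + b) / 2 := by ring
    rw [h] at this
    linarith

lemma log_midpoint_lt {a b : ℝ} (ha : 0 < a) (hb : 0 < b) (hne : a ≠ b) :
    (Real.log a + Real.log b) / 2 < Real.log ((a + b) / 2) := by
  have := strictConcaveOn_log_Ioi.2 ha hb hne (by norm_num : (0:ℝ) < 1/2)
    (by norm_num : (0:ℝ) < 1/2) (by norm_num)
  simp only [smul_eq_mul] at this
  have h : (1/2 : ℝ) * a + (1/2) * b = (a + b) / 2 := by ring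
  rw [h] at this
  linarith

/-- (Uniqueness of the Nash bargaining solution under midpoint domination.)
Let `G` be a finite nonempty index set and `U ⊆ ℝ^G` a set such that for all `u, v ∈ U` there
is `w ∈ U` coordinatewise dominating the midpoint `(u+v)/2`. If `u, v ∈ U` both have strictly
positive coordinates and both attain `sup_{x ∈ U} NSW x`, then `u = v`. -/
theorem nash_solution_unique {G : Type*} [Fintype G] [Nonempty G] (U : Set (G → ℝ))
    (hmid : ∀ u ∈ U, ∀ v ∈ U, ∃ w ∈ U, ∀ g, (u g + v g) / 2 ≤ w g)
    (u v : G → ℝ) (hu : u ∈ U) (hv : v ∈ U)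
    (hupos : ∀ g, 0 < u g) (hvpos : ∀ g, 0 < v g)
    (humax : ∀ x ∈ U, NSW x ≤ NSW u) (hvmax : ∀ x ∈ U, NSW x ≤ NSW v) :
    u = v := by
  by_contra hne
  obtain ⟨g₀, hg₀⟩ : ∃ g, u g ≠ v g := by
    by_contra h; push_neg at h; exact hne (funext h)
  obtain ⟨w, hw, hwge⟩ := hmid u hu v hv
  have hwpos : ∀ g, 0 < w g := fun g =>
    lt_of_lt_of_le (by have := hupos g; have := hvpos g; linarith) (hwge g)
  -- NSW u = NSW v as reals
  have hNu : NSW u = ((∑ g, Real.log (u g) : ℝ) : EReal) := if_pos hupos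
  have hNv : NSW v = ((∑ g, Real.log (v g) : ℝ) : EReal) := if_pos hvpos
  have hNw : NSW w = ((∑ g, Real.log (w g) : ℝ) : EReal) := if_pos hwpos
  have heq : (∑ g, Real.log (u g)) = ∑ g, Real.log (v g) := by
    have h1 := humax v hv
    have h2 := hvmax u hu
    rw [hNu, hNv] at h1 h2
    exact_mod_cast le_antisymm (by exact_mod_cast h2) (by exact_mod_cast h1)
  have hlt : (∑ g, Real.log (u g)) < ∑ g, Real.log (w g) := by
    have key : ∀ g, (Real.log (u g) + Real.log (v g)) / 2 ≤ Real.log (w g) := fun g =>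
      le_trans (log_midpoint (hupos g) (hvpos g))
        (Real.log_le_log (by have := hupos g; have := hvpos g; linarith) (hwge g))
    have keyg₀ : (Real.log (u g₀) + Real.log (v g₀)) / 2 < Real.log (w g₀) :=
      lt_of_lt_of_le (log_midpoint_lt (hupos g₀) (hvpos g₀) hg₀)
        (Real.log_le_log (by have := hupos g₀; have := hvpos g₀; linarith) (hwge g₀))
    have hsum : (∑ g, (Real.log (u g) + Real.log (v g)) / 2) < ∑ g, Real.log (w g) :=
      Finset.sum_lt_sum (fun g _ => key g) ⟨g₀, Finset.mem_univ g₀, keyg₀⟩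
    have : (∑ g, (Real.log (u g) + Real.log (v g)) / 2)
        = ((∑ g, Real.log (u g)) + ∑ g, Real.log (v g)) / 2 := by
      rw [← Finset.sum_add_distrib, Finset.sum_div]
    rw [this, ← heq, add_self_div_two] at hsum
    exact hsum
  have := humax w hw
  rw [hNu, hNw] at this
  exact absurd (by exact_mod_cast this) (not_le.mpr hlt)
end

section
/- Let n ≥ 1, let U ⊆ ℝ^n be a convex set, and let u* ∈ U have all coordinates strictly positive. Suppose u* maximizes the Nash social welfare over U, i.e. ∑_{i=1}^n log u*_i ≥ ∑_{i=1}^n log u_i for every u ∈ U with all coordinates strictly positive. Then for every u ∈ U with u_i ≥ 0 for all i, one has ∑_{i=1}^n (u_i − u*_i)/u*_i ≤ 0. -/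
/-- (Proportional-fairness characterization of the Nash solution.) Let
`U ⊆ ℝ^n` (`n ≥ 1`) be convex and let `ustar ∈ U` have strictly positive coordinates and
maximize the Nash social welfare `∑ i, log u_i` over the strictly positive points of `U`.
Then for every `u ∈ U` with nonnegative coordinates, `∑ i, (u_i − ustar_i)/ustar_i ≤ 0`. -/
theorem proportional_fairness (n : ℕ) (hn : 1 ≤ n) (U : Set (Fin n → ℝ))
    (hU : Convex ℝ U)
    (ustar : Fin n → ℝ) (hmem : ustar ∈ U) (hpos : ∀ i, 0 < ustar i)
    (hopt : ∀ u ∈ U, (∀ i, 0 < u i) →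
      ∑ i, Real.log (u i) ≤ ∑ i, Real.log (ustar i))
    (u : Fin n → ℝ) (hu : u ∈ U) (hnn : ∀ i, 0 ≤ u i) :
    ∑ i, (u i - ustar i) / ustar i ≤ 0 := by
  set g : ℝ → ℝ := fun t => ∑ i, Real.log (ustar i + t * (u i - ustar i)) with hg
  have hderiv : HasDerivAt g (∑ i, (u i - ustar i) / ustar i) 0 := by
    apply HasDerivAt.fun_sum
    intro i _
    have h1 : HasDerivAt (fun t : ℝ => ustar i + t * (u i - ustar i)) (u i - ustar i) 0 := by
      simpa using ((hasDerivAt_id (0:ℝ)).mul_const (u i - ustar i)).const_add (ustar i)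
    have h2 : HasDerivAt Real.log (ustar i)⁻¹ (ustar i + 0 * (u i - ustar i)) := by
      simpa using Real.hasDerivAt_log (by simpa using (hpos i).ne')
    have := h2.comp 0 h1
    simpa [div_eq_inv_mul, Function.comp_def] using this
  have hslope : Filter.Tendsto (fun t => (g t - g 0) / t) (nhdsWithin 0 (Set.Ioi 0))
      (nhds (∑ i, (u i - ustar i) / ustar i)) := by
    have := hderiv.hasDerivWithinAt (s := {(0:ℝ)}ᶜ)
    rw [hasDerivWithinAt_iff_tendsto_slope] at this
    have hmono : nhdsWithin (0:ℝ) (Set.Ioi 0) ≤ nhdsWithin 0 ({(0:ℝ)}ᶜ \ {0}) := by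
      apply nhdsWithin_mono
      intro x hx
      have hx0 : x ≠ 0 := LT.lt.ne' hx
      simp [hx0]
    have := this.mono_left hmono
    refine this.congr (fun t => ?_)
    simp [slope, sub_zero, div_eq_inv_mul]
  have hev : ∀ᶠ t in nhdsWithin (0:ℝ) (Set.Ioi 0), (g t - g 0) / t ≤ 0 := by
    filter_upwards [Ioo_mem_nhdsGT_of_mem (Set.left_mem_Ico.2 one_pos)] with t ht
    obtain ⟨ht0, ht1⟩ := ht
    set v : Fin n → ℝ := fun i => ustar i + t * (u i - ustar i) with hv
    have hvU : v ∈ U := by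
      have := hU hmem hu (by linarith : (0:ℝ) ≤ 1 - t) (le_of_lt ht0) (by ring)
      convert this using 1
      funext i
      simp [hv]
      ring
    have hvpos : ∀ i, 0 < v i := by
      intro i
      have : v i = (1 - t) * ustar i + t * u i := by simp [hv]; ring
      rw [this]
      have := mul_pos (by linarith : (0:ℝ) < 1 - t) (hpos i)
      nlinarith [mul_nonneg (le_of_lt ht0) (hnn i)]
    have hle : g t ≤ g 0 := by
      have := hopt v hvU hvpos
      simpa [hg, hv] using this
    have : g t - g 0 ≤ 0 := by linarith
    exact div_nonpos_of_nonpos_of_nonneg this (le_of_lt ht0)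
  exact le_of_tendsto hslope hev
end

section
/- Let A be an m × n real matrix with A·Aᵀ invertible, let b ∈ ℝ^m, and let λ = ‖Aᵀ·(A·Aᵀ)⁻¹‖ be the Euclidean operator norm. Let Ã be any m × n real matrix, b̃ ∈ ℝ^m, and q̃ ∈ ℝ^n with Ã·q̃ = b̃. If p denotes the orthogonal projection of q̃ onto P = {x ∈ ℝ^n : A·x = b}, then ‖q̃ − p‖₂ ≤ λ·( ‖A − Ã‖·‖q̃‖₂ + ‖b − b̃‖₂ ), where ‖A − Ã‖ is the Euclidean operator norm. -/
open Matrix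

/-- The Euclidean (ℓ²) operator norm of a rectangular real matrix. -/
noncomputable def matOpNorm {m n : ℕ} (M : Matrix (Fin m) (Fin n) ℝ) : ℝ :=
  ‖LinearMap.toContinuousLinearMap (Matrix.toEuclideanLin M)‖

/-- The Euclidean norm of a vector. -/
noncomputable def vecNorm {k : ℕ} (v : Fin k → ℝ) : ℝ :=
  Real.sqrt (∑ i, (v i) ^ 2)

lemma vecNorm_eq {k : ℕ} (v : Fin k → ℝ) :
    vecNorm v = ‖((WithLp.equiv 2 (Fin k → ℝ)).symm v : EuclideanSpace ℝ (Fin k))‖ := by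
  simp [vecNorm, EuclideanSpace.norm_eq, sq_abs]

lemma mulVec_norm_le {m n : ℕ} (M : Matrix (Fin m) (Fin n) ℝ) (v : Fin n → ℝ) :
    vecNorm (M.mulVec v) ≤ matOpNorm M * vecNorm v := by
  rw [vecNorm_eq, vecNorm_eq, matOpNorm]
  have := (LinearMap.toContinuousLinearMap (Matrix.toEuclideanLin M)).le_opNorm
    ((WithLp.equiv 2 (Fin n → ℝ)).symm v)
  simpa [Matrix.toEuclideanLin_apply] using this

lemma vecNorm_sub_le {k : ℕ} (u w : Fin k → ℝ) :
    vecNorm (u - w) ≤ vecNorm u + vecNorm w := by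
  rw [vecNorm_eq, vecNorm_eq, vecNorm_eq]
  simpa using norm_sub_le ((WithLp.equiv 2 (Fin k → ℝ)).symm u)
    ((WithLp.equiv 2 (Fin k → ℝ)).symm w)

/-- (Perturbed linear systems, Claim `proj_constant`.) Let `A` be an `m × n`
real matrix with `A·Aᵀ` invertible, `b ∈ ℝ^m`, and `λ = ‖Aᵀ·(A·Aᵀ)⁻¹‖` (Euclidean operator
norm). Let `Ã, b̃, q̃` satisfy `Ã·q̃ = b̃`, and let `p` be the orthogonal projection of `q̃`
onto `P = {x : A·x = b}`, namely `p = q̃ − Aᵀ·(A·Aᵀ)⁻¹·(A·q̃ − b)`. Then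
`‖q̃ − p‖₂ ≤ λ·(‖A − Ã‖·‖q̃‖₂ + ‖b − b̃‖₂)`. -/
theorem perturbed_system_projection_bound (m n : ℕ) (A : Matrix (Fin m) (Fin n) ℝ)
    (hInv : IsUnit (A * Aᵀ).det) (b : Fin m → ℝ)
    (Atil : Matrix (Fin m) (Fin n) ℝ) (btil : Fin m → ℝ) (qtil : Fin n → ℝ)
    (hq : Atil.mulVec qtil = btil) :
    ∀ p : Fin n → ℝ, p = qtil - Aᵀ.mulVec ((A * Aᵀ)⁻¹.mulVec (A.mulVec qtil - b)) →
      vecNorm (qtil - p) ≤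
        matOpNorm (Aᵀ * (A * Aᵀ)⁻¹) * (matOpNorm (A - Atil) * vecNorm qtil + vecNorm (b - btil)) := by
  intro p hp
  subst hp
  rw [sub_sub_cancel, Matrix.mulVec_mulVec]
  have h1 : A.mulVec qtil - b = (A - Atil).mulVec qtil - (b - btil) := by
    rw [Matrix.sub_mulVec, hq]; abel
  calc vecNorm ((Aᵀ * (A * Aᵀ)⁻¹).mulVec (A.mulVec qtil - b))
      ≤ matOpNorm (Aᵀ * (A * Aᵀ)⁻¹) * vecNorm (A.mulVec qtil - b) := mulVec_norm_le _ _
    _ ≤ matOpNorm (Aᵀ * (A * Aᵀ)⁻¹) * (matOpNorm (A - Atil) * vecNorm qtil + vecNorm (b - btil)) := by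
        apply mul_le_mul_of_nonneg_left _ (norm_nonneg _)
        rw [h1]
        exact le_trans (vecNorm_sub_le _ _)
          (add_le_add (mulVec_norm_le _ _) le_rfl)
end

section
/- Let (X_j)_{j≥1} be i.i.d. random variables taking values in [0,1] with mean μ and variance σ². Let δ > 0, let n₁ be a positive integer, and let a be a real number with a ≤ μ + δ/2. Then P( there exists m ≥ 1 with (n₁·a + ∑_{j=1}^m X_j)/(n₁ + m) > μ + δ ) ≤ 4σ²/(δ²·n₁) + e^{−2δ²·n₁}/(1 − e^{−2δ²}). -/
open MeasureTheory ProbabilityTheory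
open Real


lemma hoeff_upos (m : ℝ) (hm0 : 0 ≤ m) (hm1 : m ≤ 1) (s : ℝ) :
    0 < 1 - m + m * Real.exp s := by
  rcases eq_or_lt_of_le hm0 with h | h
  · simp [← h]
  · have := mul_pos h (Real.exp_pos s); linarith

lemma hoeff_fun_le (m : ℝ) (hm0 : 0 ≤ m) (hm1 : m ≤ 1) {t : ℝ} (ht : 0 ≤ t) :
    1 - m + m * Real.exp t ≤ Real.exp (t * m + t ^ 2 / 8) := by
  set u : ℝ → ℝ := fun s => 1 - m + m * Real.exp s with hu_def
  have hu : ∀ s, 0 < u s := hoeff_upos m hm0 hm1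
  set g : ℝ → ℝ := fun s => m * Real.exp s / u s with hg_def
  have hud : ∀ s, HasDerivAt u (m * Real.exp s) s := by
    intro s
    exact (((Real.hasDerivAt_exp s).const_mul m).const_add (1 - m))
  have hgd : ∀ s, HasDerivAt g (g s * (1 - g s)) s := by
    intro s
    have h : HasDerivAt g ((m * Real.exp s * u s - m * Real.exp s * (m * Real.exp s)) / u s ^ 2) s :=
      (((Real.hasDerivAt_exp s).const_mul m).div (hud s) (hu s).ne')
    convert h using 1
    have h1 : (1 : ℝ) - g s = (u s - m * Real.exp s) / u s := by
      rw [sub_div, div_self (hu s).ne']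
    rw [hg_def]
    simp only
    rw [h1, div_mul_div_comm, sq, mul_sub]
  have hg0 : ∀ s, 0 ≤ g s := fun s =>
    div_nonneg (mul_nonneg hm0 (Real.exp_pos s).le) (hu s).le
  have hg1 : ∀ s, g s ≤ 1 := by
    intro s
    rw [hg_def, div_le_one (hu s)]
    simp only [hu_def]; linarith
  -- q s := s/4 + m - g s is monotone
  set q : ℝ → ℝ := fun s => s / 4 + m - g s with hq_def
  have hqd : ∀ s, HasDerivAt q (1 / 4 - g s * (1 - g s)) s := by
    intro s
    exact (((hasDerivAt_id s).div_const 4).add_const m).sub (hgd s)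
  have hqmono : Monotone q := by
    refine monotone_of_deriv_nonneg (fun s => (hqd s).differentiableAt) (fun s => ?_)
    rw [(hqd s).deriv]
    nlinarith [hg0 s, hg1 s, sq_nonneg (g s - 1/2)]
  have hq0 : q 0 = 0 := by simp [hq_def, hg_def, hu_def]
  have hqnn : ∀ s, 0 ≤ s → 0 ≤ q s := fun s hs => hq0 ▸ hqmono hs
  -- r s := s^2/8 + s*m - log (u s), with r' = q
  set r : ℝ → ℝ := fun s => s ^ 2 / 8 + s * m - Real.log (u s) with hr_def
  have hrd : ∀ s, HasDerivAt r (q s) s := by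
    intro s
    have hlog : HasDerivAt (fun x => Real.log (u x)) (m * Real.exp s / u s) s :=
      (hud s).log (hu s).ne'
    have h1 : HasDerivAt (fun x : ℝ => x ^ 2 / 8 + x * m)
        (2 * s / 8 + m) s := by
      exact (((hasDerivAt_pow 2 s).div_const 8).add ((hasDerivAt_id s).mul_const m)).congr_deriv (by norm_num)
    have this : HasDerivAt r (2 * s / 8 + m - m * Real.exp s / u s) s := h1.sub hlog
    convert this using 1
    simp only [hq_def, hg_def]
    ring
  have hrmono : MonotoneOn r (Set.Ici (0 : ℝ)) := by
    refine monotoneOn_of_deriv_nonneg (convex_Ici 0)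
      (fun s _ => (hrd s).differentiableAt.continuousAt.continuousWithinAt)
      (fun s _ => (hrd s).differentiableAt.differentiableWithinAt) (fun s hs => ?_)
    rw [(hrd s).deriv]
    exact hqnn s (le_of_lt (by simpa using hs))
  have hr0 : r 0 = 0 := by simp [hr_def, hu_def]
  have hrt : 0 ≤ r t := hr0 ▸ hrmono (Set.self_mem_Ici) ht ht
  have hlog_le : Real.log (u t) ≤ t * m + t ^ 2 / 8 := by
    simp only [hr_def] at hrt; linarith
  calc 1 - m + m * Real.exp t = Real.exp (Real.log (u t)) := (Real.exp_log (hu t)).symm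
    _ ≤ _ := Real.exp_le_exp.mpr hlog_le


lemma integrable_exp_mul_of_Icc {Ω : Type*} [MeasureSpace Ω] [IsProbabilityMeasure (ℙ : Measure Ω)]
    (Y : Ω → ℝ) (hY : Measurable Y) (hr : ∀ ω, Y ω ∈ Set.Icc (0:ℝ) 1) {t : ℝ} (ht : 0 ≤ t) :
    Integrable (fun ω => Real.exp (t * Y ω)) ℙ := by
  refine Integrable.mono' (integrable_const (Real.exp t))
    ((hY.const_mul t).exp).aestronglyMeasurable (ae_of_all _ fun ω => ?_)
  rw [Real.norm_eq_abs, abs_of_pos (Real.exp_pos _)]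
  exact Real.exp_le_exp.mpr (by nlinarith [(hr ω).1, (hr ω).2])

lemma integrable_of_Icc {Ω : Type*} [MeasureSpace Ω] [IsProbabilityMeasure (ℙ : Measure Ω)]
    (Y : Ω → ℝ) (hY : Measurable Y) (hr : ∀ ω, Y ω ∈ Set.Icc (0:ℝ) 1) :
    Integrable Y ℙ := by
  refine Integrable.mono' (integrable_const 1) hY.aestronglyMeasurable (ae_of_all _ fun ω => ?_)
  rw [Real.norm_eq_abs, abs_le]
  exact ⟨by linarith [(hr ω).1], (hr ω).2⟩

lemma mgf_le_of_Icc {Ω : Type*} [MeasureSpace Ω] [IsProbabilityMeasure (ℙ : Measure Ω)]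
    (Y : Ω → ℝ) (hY : Measurable Y) (hr : ∀ ω, Y ω ∈ Set.Icc (0:ℝ) 1)
    (m : ℝ) (hm : ∫ ω, Y ω ∂ℙ = m) {t : ℝ} (ht : 0 ≤ t) :
    mgf Y ℙ t ≤ Real.exp (t * m + t ^ 2 / 8) := by
  have hYint : Integrable Y ℙ := integrable_of_Icc Y hY hr
  have hint : Integrable (fun ω => Real.exp (t * Y ω)) ℙ := integrable_exp_mul_of_Icc Y hY hr ht
  have hrhs : Integrable (fun ω => 1 - Y ω + Y ω * Real.exp t) ℙ :=
    ((integrable_const 1).sub hYint).add (hYint.mul_const _)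
  have hpt : ∀ ω, Real.exp (t * Y ω) ≤ 1 - Y ω + Y ω * Real.exp t := by
    intro ω
    have h := convexOn_exp.2 (Set.mem_univ (0:ℝ)) (Set.mem_univ t)
      (show (0:ℝ) ≤ 1 - Y ω by linarith [(hr ω).2]) ((hr ω).1)
      (show (1 - Y ω) + Y ω = 1 by ring)
    simp only [smul_eq_mul, mul_zero, zero_add, Real.exp_zero, mul_one] at h
    calc Real.exp (t * Y ω) = Real.exp (Y ω * t) := by rw [mul_comm]
      _ ≤ (1 - Y ω) * 1 + Y ω * Real.exp t := by simpa using h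
      _ = 1 - Y ω + Y ω * Real.exp t := by ring
  have h1 : mgf Y ℙ t ≤ ∫ ω, (1 - Y ω + Y ω * Real.exp t) ∂ℙ :=
    integral_mono hint hrhs hpt
  have h2 : ∫ ω, (1 - Y ω + Y ω * Real.exp t) ∂ℙ = 1 - m + m * Real.exp t := by
    have hA : Integrable (fun ω => 1 - Y ω) ℙ := (integrable_const 1).sub hYint
    have hB : Integrable (fun ω => Y ω * Real.exp t) ℙ := hYint.mul_const _
    rw [integral_add hA hB, integral_mul_const, integral_sub (integrable_const 1) hYint, hm]
    simp
  have hm0 : 0 ≤ m := hm ▸ integral_nonneg (fun ω => (hr ω).1)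
  have hm1 : m ≤ 1 := by
    rw [← hm]
    calc ∫ ω, Y ω ∂ℙ ≤ ∫ _, (1:ℝ) ∂ℙ := integral_mono hYint (integrable_const 1) fun ω => (hr ω).2
      _ = 1 := by simp
  exact h1.trans (h2 ▸ hoeff_fun_le m hm0 hm1 ht)

lemma chernoff_sum {Ω : Type*} [MeasureSpace Ω] [IsProbabilityMeasure (ℙ : Measure Ω)]
    (X : ℕ → Ω → ℝ) (hmeas : ∀ j, Measurable (X j))
    (hindep : iIndepFun X ℙ)
    (hrange : ∀ j ω, X j ω ∈ Set.Icc (0:ℝ) 1)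
    (μ : ℝ) (hmean : ∀ j, ∫ ω, X j ω ∂ℙ = μ)
    (m : ℕ) (hm : 0 < m) (ε : ℝ) (hε : 0 < ε) :
    (ℙ {ω | (m:ℝ) * μ + ε ≤ ∑ j ∈ Finset.range m, X j ω}).toReal ≤
      Real.exp (-2 * ε ^ 2 / m) := by
  have hmR : (0:ℝ) < m := Nat.cast_pos.mpr hm
  set t : ℝ := 4 * ε / m with ht_def
  have ht : 0 ≤ t := by positivity
  have h_int : Integrable (fun ω => Real.exp (t * (∑ i ∈ Finset.range m, X i) ω)) ℙ :=
    hindep.integrable_exp_mul_sum hmeas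
      (fun i _ => integrable_exp_mul_of_Icc (X i) (hmeas i) (hrange i) ht)
  have key := measure_ge_le_exp_mul_mgf (X := ∑ i ∈ Finset.range m, X i) (μ := ℙ)
    ((m:ℝ) * μ + ε) ht h_int
  rw [hindep.mgf_sum hmeas (Finset.range m)] at key
  have hprod : ∏ i ∈ Finset.range m, mgf (X i) ℙ t ≤
      Real.exp ((m:ℝ) * (t * μ + t ^ 2 / 8)) := by
    calc ∏ i ∈ Finset.range m, mgf (X i) ℙ t
        ≤ ∏ i ∈ Finset.range m, Real.exp (t * μ + t ^ 2 / 8) :=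
          Finset.prod_le_prod (fun i _ => mgf_nonneg)
            (fun i _ => mgf_le_of_Icc (X i) (hmeas i) (hrange i) μ (hmean i) ht)
      _ = Real.exp ((m:ℝ) * (t * μ + t ^ 2 / 8)) := by
          rw [Finset.prod_const, Finset.card_range, ← Real.exp_nat_mul]
  have hset : {ω | (m:ℝ) * μ + ε ≤ ∑ j ∈ Finset.range m, X j ω} =
      {ω | (m:ℝ) * μ + ε ≤ (∑ i ∈ Finset.range m, X i) ω} := by
    simp only [Finset.sum_apply]
  rw [hset]
  calc (ℙ {ω | (m:ℝ) * μ + ε ≤ (∑ i ∈ Finset.range m, X i) ω}).toReal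
      ≤ Real.exp (-t * ((m:ℝ) * μ + ε)) * ∏ i ∈ Finset.range m, mgf (X i) ℙ t := key
    _ ≤ Real.exp (-t * ((m:ℝ) * μ + ε)) * Real.exp ((m:ℝ) * (t * μ + t ^ 2 / 8)) := by
        exact mul_le_mul_of_nonneg_left hprod (Real.exp_nonneg _)
    _ = Real.exp (-t * ((m:ℝ) * μ + ε) + (m:ℝ) * (t * μ + t ^ 2 / 8)) := (Real.exp_add _ _).symm
    _ = Real.exp (-2 * ε ^ 2 / m) := by
        congr 1
        rw [ht_def]
        field_simp
        ring


/-- (Maximal-inequality bound on the empirical mean ever crossing an outer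
boundary.) Let `(X j)_{j ∈ ℕ}` be i.i.d. `[0,1]`-valued random variables with mean `μ` and
variance `σ²` (here `X j` plays the role of the paper's `X_{j+1}`). Let `δ > 0`, let `n₁` be a
positive integer and let `a ≤ μ + δ/2`. Then the probability that for some `m ≥ 1` the
weighted average `(n₁·a + ∑_{j=1}^m X_j)/(n₁ + m)` exceeds `μ + δ` is at most
`4σ²/(δ²·n₁) + e^{−2δ²·n₁}/(1 − e^{−2δ²})`. -/
theorem empirical_mean_stays_in_boundary
    {Ω : Type*} [MeasureSpace Ω] [IsProbabilityMeasure (ℙ : Measure Ω)]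
    (X : ℕ → Ω → ℝ) (hmeas : ∀ j, Measurable (X j))
    (hindep : iIndepFun X ℙ)
    (hident : ∀ i j, IdentDistrib (X i) (X j) ℙ ℙ)
    (hrange : ∀ j ω, X j ω ∈ Set.Icc (0 : ℝ) 1)
    (μ σ2 : ℝ) (hmean : ∀ j, ∫ ω, X j ω ∂ℙ = μ)
    (hvar : ∀ j, variance (X j) ℙ = σ2)
    (δ : ℝ) (hδ : 0 < δ) (n₁ : ℕ) (hn₁ : 0 < n₁) (a : ℝ) (ha : a ≤ μ + δ / 2) :
    ℙ {ω | ∃ m : ℕ, 1 ≤ m ∧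
        μ + δ < (n₁ * a + ∑ j ∈ Finset.range m, X j ω) / (n₁ + m)} ≤
      ENNReal.ofReal (4 * σ2 / (δ ^ 2 * n₁) +
        Real.exp (-2 * δ ^ 2 * n₁) / (1 - Real.exp (-2 * δ ^ 2))) := by
  have hσ : 0 ≤ σ2 := hvar 0 ▸ variance_nonneg (X 0) ℙ
  have hn₁R : (0:ℝ) < n₁ := Nat.cast_pos.mpr hn₁
  -- the per-m events
  set A : ℕ → Set Ω := fun k =>
    {ω | ((k+1 : ℕ):ℝ) * μ + δ * (((k+1 : ℕ):ℝ) + (n₁:ℝ)/2) ≤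
      ∑ j ∈ Finset.range (k+1), X j ω} with hA_def
  -- the event is contained in the union
  have hsub : {ω | ∃ m : ℕ, 1 ≤ m ∧
      μ + δ < (n₁ * a + ∑ j ∈ Finset.range m, X j ω) / (n₁ + m)} ⊆ ⋃ k, A k := by
    rintro ω ⟨m, hm1, hlt⟩
    refine Set.mem_iUnion.mpr ⟨m - 1, ?_⟩
    have hmeq : m - 1 + 1 = m := Nat.succ_pred_eq_of_pos hm1
    simp only [hA_def, Set.mem_setOf_eq, hmeq]
    have hmR : (0:ℝ) < m := Nat.cast_pos.mpr hm1
    have hd : (0:ℝ) < (n₁:ℝ) + m := by linarith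
    rw [lt_div_iff₀ hd] at hlt
    have hna : (n₁:ℝ) * a ≤ (n₁:ℝ) * (μ + δ / 2) :=
      mul_le_mul_of_nonneg_left ha hn₁R.le
    nlinarith
  -- bound each probability
  have hbound : ∀ k : ℕ, ℙ (A k) ≤
      ENNReal.ofReal (Real.exp (-2 * δ ^ 2 * ((n₁:ℝ) + (k+1 : ℕ)))) := by
    intro k
    have hmpos : 0 < k + 1 := Nat.succ_pos k
    have hmR : (0:ℝ) < ((k+1 : ℕ):ℝ) := Nat.cast_pos.mpr hmpos
    have hε : (0:ℝ) < δ * (((k+1 : ℕ):ℝ) + (n₁:ℝ)/2) := by positivity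
    have h1 := chernoff_sum X hmeas hindep hrange μ hmean (k+1) hmpos _ hε
    have h2 : Real.exp (-2 * (δ * (((k+1 : ℕ):ℝ) + (n₁:ℝ)/2)) ^ 2 / ((k+1 : ℕ):ℝ)) ≤
        Real.exp (-2 * δ ^ 2 * ((n₁:ℝ) + ((k+1 : ℕ):ℝ))) := by
      apply Real.exp_le_exp.mpr
      rw [div_le_iff₀ hmR]
      nlinarith [sq_nonneg ((n₁:ℝ) * δ), sq_nonneg δ, sq_nonneg (n₁:ℝ)]
    calc ℙ (A k) = ENNReal.ofReal (ℙ (A k)).toReal :=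
          (ENNReal.ofReal_toReal (measure_ne_top _ _)).symm
      _ ≤ ENNReal.ofReal (Real.exp (-2 * δ ^ 2 * ((n₁:ℝ) + (k+1 : ℕ)))) :=
          ENNReal.ofReal_le_ofReal (h1.trans h2)
  -- sum the geometric series
  set r : ℝ := Real.exp (-2 * δ ^ 2) with hr_def
  have hr0 : 0 ≤ r := Real.exp_nonneg _
  have hr1 : r < 1 := Real.exp_lt_one_iff.mpr (by nlinarith)
  have hterm : ∀ k : ℕ, Real.exp (-2 * δ ^ 2 * ((n₁:ℝ) + (k+1 : ℕ))) =
      Real.exp (-2 * δ ^ 2 * ((n₁:ℝ) + 1)) * r ^ k := by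
    intro k
    rw [hr_def, ← Real.exp_nat_mul, ← Real.exp_add]
    congr 1
    push_cast
    ring
  have hsummable : Summable (fun k : ℕ => Real.exp (-2 * δ ^ 2 * ((n₁:ℝ) + (k+1 : ℕ)))) := by
    simp only [hterm]
    exact (summable_geometric_of_lt_one hr0 hr1).mul_left _
  have hsum_le : (∑' k : ℕ, Real.exp (-2 * δ ^ 2 * ((n₁:ℝ) + (k+1 : ℕ)))) ≤
      4 * σ2 / (δ ^ 2 * n₁) + Real.exp (-2 * δ ^ 2 * n₁) / (1 - Real.exp (-2 * δ ^ 2)) := by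
    have hsum : (∑' k : ℕ, Real.exp (-2 * δ ^ 2 * ((n₁:ℝ) + (k+1 : ℕ)))) =
        Real.exp (-2 * δ ^ 2 * ((n₁:ℝ) + 1)) * (1 - r)⁻¹ := by
      simp only [hterm]
      rw [tsum_mul_left, tsum_geometric_of_lt_one hr0 hr1]
    rw [hsum]
    have hfirst : 0 ≤ 4 * σ2 / (δ ^ 2 * n₁) := by positivity
    have hden : 0 < 1 - r := by linarith
    have hnum : Real.exp (-2 * δ ^ 2 * ((n₁:ℝ) + 1)) ≤ Real.exp (-2 * δ ^ 2 * n₁) :=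
      Real.exp_le_exp.mpr (by nlinarith)
    have : Real.exp (-2 * δ ^ 2 * ((n₁:ℝ) + 1)) * (1 - r)⁻¹ ≤
        Real.exp (-2 * δ ^ 2 * n₁) / (1 - r) := by
      rw [div_eq_mul_inv]
      exact mul_le_mul_of_nonneg_right hnum (by positivity)
    linarith
  calc ℙ {ω | ∃ m : ℕ, 1 ≤ m ∧
        μ + δ < (n₁ * a + ∑ j ∈ Finset.range m, X j ω) / (n₁ + m)}
      ≤ ℙ (⋃ k, A k) := measure_mono hsub
    _ ≤ ∑' k, ℙ (A k) := measure_iUnion_le A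
    _ ≤ ∑' k, ENNReal.ofReal (Real.exp (-2 * δ ^ 2 * ((n₁:ℝ) + (k+1 : ℕ)))) :=
        ENNReal.tsum_le_tsum hbound
    _ = ENNReal.ofReal (∑' k : ℕ, Real.exp (-2 * δ ^ 2 * ((n₁:ℝ) + (k+1 : ℕ)))) :=
        (ENNReal.ofReal_tsum_of_nonneg (fun k => Real.exp_nonneg _) hsummable).symm
    _ ≤ _ := ENNReal.ofReal_le_ofReal hsum_le
end
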